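/- Let A be a unital C*-algebra. If A has no tracial state, then A has strong property (T). -/

import Mathlib

open scoped ComplexOrder ENNReal
open MulOpposite Filter

noncomputable section

/-- A unital Hilbert bimodule over a unital `ℂ`-algebra with involution: a complex Hilbert
space `H` together with a unital `*`-homomorphism `lmul : A → B(H)` and a unital
`*`-homomorphism `rmul : Aᵐᵒᵖ → B(H)` with commuting ranges. -/
structure HBimod (A : Type*) [Ring A] [StarRing A] [Algebra ℂ A]
    (H : Type*) [NormedAddCommGroup H] [InnerProductSpace ℂ H] [CompleteSpace H] where
  lmul : A →⋆ₐ[ℂ] (H →L[ℂ] H)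
  rmul : Aᵐᵒᵖ →⋆ₐ[ℂ] (H →L[ℂ] H)
  commutes : ∀ (a : A) (b : Aᵐᵒᵖ), Commute (lmul a) (rmul b)

namespace HBimod

variable {A : Type*} [Ring A] [StarRing A] [Algebra ℂ A]
variable {H : Type*} [NormedAddCommGroup H] [InnerProductSpace ℂ H] [CompleteSpace H]
variable {H' : Type*} [NormedAddCommGroup H'] [InnerProductSpace ℂ H'] [CompleteSpace H']

/-- The left action `a · ξ`. -/
def l (M : HBimod A H) (a : A) (ξ : H) : H := M.lmul a ξ

/-- The right action `ξ · a`. -/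
def r (M : HBimod A H) (a : A) (ξ : H) : H := M.rmul (op a) ξ

/-- `V_H(Q, β)`, the set of `(Q,β)`-central unit vectors. -/
def V (M : HBimod A H) (Q : Finset A) (β : ℝ) : Set H :=
  {ξ | ‖ξ‖ = 1 ∧ ∀ x ∈ Q, ‖M.l x ξ - M.r x ξ‖ < β}

/-- `H^B`, the subspace of central vectors for a subset `B ⊆ A`. -/
def central (M : HBimod A H) (B : Set A) : Submodule ℂ H where
  carrier := {ξ | ∀ b ∈ B, M.l b ξ = M.r b ξ}
  add_mem' := by
    intro x y hx hy b hb
    simp only [Set.mem_setOf_eq, l, r] at *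
    rw [map_add, map_add, hx b hb, hy b hb]
  zero_mem' := by
    intro b hb
    simp only [l, r, map_zero]
  smul_mem' := by
    intro c x hx b hb
    simp only [Set.mem_setOf_eq, l, r] at *
    rw [map_smul, map_smul, hx b hb]

theorem mem_central {M : HBimod A H} {B : Set A} {ξ : H} :
    ξ ∈ M.central B ↔ ∀ b ∈ B, M.l b ξ = M.r b ξ := Iff.rfl

theorem isClosed_central (M : HBimod A H) (B : Set A) :
    IsClosed ((M.central B : Submodule ℂ H) : Set H) := by
  have h : ((M.central B : Submodule ℂ H) : Set H)
      = ⋂ b ∈ B, {ξ : H | M.lmul b ξ = M.rmul (op b) ξ} := by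
    ext ξ
    simp only [SetLike.mem_coe, mem_central, Set.mem_iInter, Set.mem_setOf_eq, l, r]
  rw [h]
  exact isClosed_biInter fun b _ =>
    isClosed_eq (M.lmul b).continuous (M.rmul (op b)).continuous

/-- Orthogonal projection onto a closed subspace, as a map `H → H`. -/
def projOn (S : Submodule ℂ H) (hS : IsClosed (S : Set H)) (ξ : H) : H :=
  haveI : CompleteSpace S := hS.completeSpace_coe
  (S.orthogonalProjectionOnto ξ : H)

/-- `P^B_H`, the orthogonal projection onto the space `H^B` of `B`-central vectors. -/
def P (M : HBimod A H) (B : Set A) (ξ : H) : H :=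
  projOn (M.central B) (M.isClosed_central B) ξ

/-- `(ξ i)` is an almost central unit net for `A` consisting of vectors of `S`. -/
def IsAlmostCentralNet {ι : Type*} [pre : Preorder ι] (M : HBimod A H) (S : Set H)
    (ξ : ι → H) : Prop :=
  Nonempty ι ∧ IsDirected ι (· ≤ ·) ∧ (∀ i, ξ i ∈ S ∧ ‖ξ i‖ = 1) ∧
    ∀ a : A, Tendsto (fun i => ‖M.l a (ξ i) - M.r a (ξ i)‖) atTop (nhds 0)

/-- There exists an almost central unit net for `A` consisting of vectors of `S`. -/
def HasAlmostCentralNet (M : HBimod A H) (S : Set H) : Prop :=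
  ∃ (ι : Type*) (pre : Preorder ι) (ξ : ι → H), IsAlmostCentralNet (pre := pre) M S ξ

/-- The Kazhdan-type constant `t^A(Q; H, K) ∈ [0,∞]`. -/
def tConst (M : HBimod A H) (Q : Finset A) (K : Submodule ℂ H) : ℝ≥0∞ :=
  ⨅ ξ ∈ {ξ : H | ξ ∈ Kᗮ ∧ ‖ξ‖ = 1},
    ENNReal.ofReal (Real.sqrt (∑ x ∈ Q, ‖M.l x ξ - M.r x ξ‖ ^ 2))

/-- `K` is a (closed) sub-bimodule of `H`. -/
def IsSubBimod (M : HBimod A H) (K : Submodule ℂ H) : Prop :=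
  IsClosed (K : Set H) ∧ (∀ (a : A), ∀ ξ ∈ K, M.l a ξ ∈ K) ∧
    (∀ (a : A), ∀ ξ ∈ K, M.r a ξ ∈ K)

/-- The closed subspace `closure {a · ξ : a ∈ A}`. -/
def orbitCl (M : HBimod A H) (ξ : H) : Submodule ℂ H :=
  (Submodule.span ℂ {y : H | ∃ a : A, y = M.l a ξ}).topologicalClosure

/-- `H_𝒞`, the smallest closed sub-bimodule of `H` containing `H^A` (the centrally
generated part of `H`). -/
def centGen (M : HBimod A H) : Submodule ℂ H :=
  sInf {K : Submodule ℂ H | IsSubBimod M K ∧ M.central Set.univ ≤ K}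

/-- The conjugation action `π(u) ξ = u · ξ · u*` of unitaries on a bimodule. -/
def conj (M : HBimod A H) (u : A) (ξ : H) : H := M.l u (M.r (star u) ξ)

/-- The subspace of vectors fixed by the conjugation action of all unitaries of `A`. -/
def unitaryFixed (M : HBimod A H) : Submodule ℂ H where
  carrier := {η | ∀ u ∈ unitary A, M.conj u η = η}
  add_mem' := by
    intro x y hx hy u hu
    simp only [Set.mem_setOf_eq, conj, l, r] at *
    rw [map_add, map_add, hx u hu, hy u hu]
  zero_mem' := by
    intro u hu
    simp only [conj, l, r, map_zero]
  smul_mem' := by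
    intro c x hx u hu
    simp only [Set.mem_setOf_eq, conj, l, r] at *
    rw [map_smul, map_smul, hx u hu]

theorem mem_unitaryFixed {M : HBimod A H} {η : H} :
    η ∈ M.unitaryFixed ↔ ∀ u ∈ unitary A, M.conj u η = η := Iff.rfl

theorem isClosed_unitaryFixed (M : HBimod A H) :
    IsClosed ((M.unitaryFixed : Submodule ℂ H) : Set H) := by
  have h : ((M.unitaryFixed : Submodule ℂ H) : Set H)
      = ⋂ u ∈ unitary A, {η : H | M.conj u η = η} := by
    ext η
    simp only [SetLike.mem_coe, mem_unitaryFixed, Set.mem_iInter, Set.mem_setOf_eq]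
  rw [h]
  refine isClosed_biInter fun u _ => isClosed_eq ?_ continuous_id
  exact (M.lmul u).continuous.comp (M.rmul (op (star u))).continuous

theorem isClosed_inf_unitaryFixed (M : HBimod A H) (Hs : Submodule ℂ H)
    (hHs : IsClosed (Hs : Set H)) :
    IsClosed ((Hs ⊓ M.unitaryFixed : Submodule ℂ H) : Set H) := by
  rw [Submodule.coe_inf]
  exact hHs.inter (M.isClosed_unitaryFixed)

end HBimod

/-- The pair `(A, B)` has property (T). -/
def PropertyTPair (A : Type*) [Ring A] [StarRing A] [Algebra ℂ A] (B : Set A) : Prop :=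
  ∃ (F : Finset A) (ε : ℝ), 0 < ε ∧
    ∀ (H : Type*) [NormedAddCommGroup H] [InnerProductSpace ℂ H] [CompleteSpace H]
      (M : HBimod A H), (HBimod.V M F ε).Nonempty → HBimod.central M B ≠ ⊥

/-- The pair `(A, B)` has strong property (T). -/
def StrongPropertyTPair (A : Type*) [Ring A] [StarRing A] [Algebra ℂ A] (B : Set A) : Prop :=
  ∀ α : ℝ, 0 < α → ∃ (Q : Finset A) (β : ℝ), 0 < β ∧
    ∀ (H : Type*) [NormedAddCommGroup H] [InnerProductSpace ℂ H] [CompleteSpace H]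
      (M : HBimod A H), ∀ ξ ∈ HBimod.V M Q β, ‖ξ - HBimod.P M B ξ‖ < α

/-- The pair `(A, B)` is co-rigid. -/
def CoRigid (A : Type*) [Ring A] [StarRing A] [Algebra ℂ A] (B : Set A) : Prop :=
  ∃ (Q : Finset A) (β : ℝ), 0 < β ∧
    ∀ (H : Type*) [NormedAddCommGroup H] [InnerProductSpace ℂ H] [CompleteSpace H]
      (M : HBimod A H),
      (HBimod.V M Q β ∩ (HBimod.central M B : Set H)).Nonempty →
        HBimod.central M Set.univ ≠ ⊥

/-- The pair `(A, B)` is strongly co-rigid. -/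
def StronglyCoRigid (A : Type*) [Ring A] [StarRing A] [Algebra ℂ A] (B : Set A) : Prop :=
  ∀ γ : ℝ, 0 < γ → ∃ (Q : Finset A) (δ : ℝ), 0 < δ ∧
    ∀ (H : Type*) [NormedAddCommGroup H] [InnerProductSpace ℂ H] [CompleteSpace H]
      (M : HBimod A H),
      ∀ ξ ∈ HBimod.V M Q δ ∩ (HBimod.central M B : Set H),
        ‖ξ - HBimod.P M Set.univ ξ‖ < γ

/-- An isometric embedding of Hilbert `A`-bimodules. -/
structure HBimodIsometry {A : Type*} [Ring A] [StarRing A] [Algebra ℂ A]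
    {H : Type*} [NormedAddCommGroup H] [InnerProductSpace ℂ H] [CompleteSpace H]
    {H' : Type*} [NormedAddCommGroup H'] [InnerProductSpace ℂ H'] [CompleteSpace H']
    (M : HBimod A H) (N : HBimod A H') where
  toIsometry : H →ₗᵢ[ℂ] H'
  map_l : ∀ (a : A) (ξ : H), toIsometry (HBimod.l M a ξ) = HBimod.l N a (toIsometry ξ)
  map_r : ∀ (a : A) (ξ : H), toIsometry (HBimod.r M a ξ) = HBimod.r N a (toIsometry ξ)

end

/-!
If strong property (T) fails for some `α > 0`, then for every finite `Q ⊆ A` and `β > 0` there is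
a `(Q, β)`-central unit vector `ξ` with `‖ξ - P ξ‖ ≥ α`. The vector `η = ξ - P ξ` has the same
commutators `[x, η] = [x, ξ]`, and the identity
`⟪η, abη⟫ - ⟪η, baη⟫ = ⟪η, a[b, η]⟫ + ⟪η b* - b* η, aη⟫`
shows that the vector state of `η` is almost tracial, with error `‖a‖ (‖[b, η]‖ + ‖[b*, η]‖) / α`.
A weak-* limit point of these states is a tracial state.
-/

open scoped InnerProductSpace

section States

variable (A : Type*) [NormedRing A] [StarRing A] [NormedAlgebra ℂ A]

-- The bound `‖ψ‖ ≤ 1` is automatic for positive unital functionals on a C⋆-algebra; it is built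
-- in so that the state space is weak-* compact by Banach–Alaoglu.
def stateSpace : Set (WeakDual ℂ A) :=
  WeakDual.toStrongDual ⁻¹' Metric.closedBall 0 1 ∩
    {ψ | (∀ a : A, 0 ≤ ψ (star a * a)) ∧ ψ 1 = 1}

theorem isCompact_stateSpace : IsCompact (stateSpace A) := by
  refine (WeakDual.isCompact_closedBall 0 1).inter_right ?_
  simp only [Set.ofPred_and, Set.ofPred_forall]
  exact (isClosed_iInter fun a => isClosed_le continuous_const
    (WeakDual.eval_continuous _)).inter (isClosed_eq (WeakDual.eval_continuous _) continuous_const)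

variable {A}

open Classical in
theorem exists_tracial_mem_stateSpace_of_almost_tracial
    (h : ∀ (Q : Finset A) (ε : ℝ), 0 < ε → ∃ ψ ∈ stateSpace A,
      ∀ a, ∀ b ∈ Q, ‖ψ (a * b) - ψ (b * a)‖ ≤ ε * ‖a‖) :
    ∃ τ ∈ stateSpace A, ∀ a b : A, τ (a * b) = τ (b * a) := by
  choose φ hφ hcomm using fun p : Finset A × ℕ => h p.1 (1 / (p.2 + 1)) Nat.one_div_pos_of_nat
  let U := Ultrafilter.of (atTop : Filter (Finset A × ℕ))
  obtain ⟨τ, hτ, hlim⟩ :=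
    (isCompact_stateSpace A).ultrafilter_le_nhds' (U.map φ)
      (Ultrafilter.mem_map.2 (Filter.univ_mem' hφ))
  have hsnd : Tendsto Prod.snd (atTop : Filter (Finset A × ℕ)) atTop :=
    tendsto_atTop_atTop_of_monotone (fun _ _ h => h.2) fun n => ⟨(∅, n), le_rfl⟩
  refine ⟨τ, hτ, fun a b => sub_eq_zero.mp <| tendsto_nhds_unique
    (f := fun p => φ p (a * b) - φ p (b * a)) (l := U) ?_ (.mono_left ?_ (Ultrafilter.of_le _))⟩
  · exact ((WeakDual.eval_continuous _).sub (WeakDual.eval_continuous _)).tendsto τ |>.comp hlim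
  · refine squeeze_zero_norm' ?_
      (by simpa using (tendsto_one_div_add_atTop_nhds_zero_nat.mul_const ‖a‖).comp hsnd)
    filter_upwards [eventually_ge_atTop (({b} : Finset A), 0)] with p hp
    simpa using hcomm p a b (hp.1 (Finset.mem_singleton_self b))

end States

namespace HBimod

section Algebraic

variable {A : Type*} [Ring A] [StarRing A] [Algebra ℂ A]
variable {H : Type*} [NormedAddCommGroup H] [InnerProductSpace ℂ H] [CompleteSpace H]
variable (M : HBimod A H)

theorem l_mul (a b : A) (ξ : H) : M.l (a * b) ξ = M.l a (M.l b ξ) := by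
  simp only [l, map_mul, mul_apply_eq_comp]

theorem l_one (ξ : H) : M.l 1 ξ = ξ := by
  simp only [l, map_one, one_apply_eq_self]

theorem l_sub (a : A) (ξ ζ : H) : M.l a (ξ - ζ) = M.l a ξ - M.l a ζ := map_sub _ _ _

theorem r_sub (a : A) (ξ ζ : H) : M.r a (ξ - ζ) = M.r a ξ - M.r a ζ := map_sub _ _ _

theorem l_r_comm (a b : A) (ξ : H) : M.l a (M.r b ξ) = M.r b (M.l a ξ) :=
  congrArg (fun T : H →L[ℂ] H => T ξ) (M.commutes a (op b)).eq

theorem inner_l_star_left (a : A) (ξ ζ : H) : ⟪M.l (star a) ξ, ζ⟫_ℂ = ⟪ξ, M.l a ζ⟫_ℂ := by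
  rw [l, map_star, ContinuousLinearMap.star_eq_adjoint, ContinuousLinearMap.adjoint_inner_left]
  rfl

theorem inner_r_star_left (a : A) (ξ ζ : H) : ⟪M.r (star a) ξ, ζ⟫_ℂ = ⟪ξ, M.r a ζ⟫_ℂ := by
  rw [r, op_star, map_star, ContinuousLinearMap.star_eq_adjoint,
    ContinuousLinearMap.adjoint_inner_left]
  rfl

theorem P_mem_central (B : Set A) (ξ : H) : M.P B ξ ∈ M.central B :=
  haveI := (M.isClosed_central B).completeSpace_coe
  ((M.central B).orthogonalProjectionOnto ξ).2

theorem l_sub_r_sub_P (B : Set A) {x : A} (hx : x ∈ B) (ξ : H) :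
    M.l x (ξ - M.P B ξ) - M.r x (ξ - M.P B ξ) = M.l x ξ - M.r x ξ := by
  rw [l_sub, r_sub, M.P_mem_central B ξ x hx]
  abel

theorem inner_l_mul_sub_inner_l_mul (a b : A) (η : H) :
    ⟪η, M.l (a * b) η⟫_ℂ - ⟪η, M.l (b * a) η⟫_ℂ =
      ⟪η, M.l a (M.l b η - M.r b η)⟫_ℂ + ⟪M.r (star b) η - M.l (star b) η, M.l a η⟫_ℂ := by
  rw [l_mul, l_mul, l_sub, inner_sub_right, inner_sub_left, inner_r_star_left,
    inner_l_star_left, l_r_comm]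
  ring

end Algebraic

section CStar

variable {A : Type*} [CStarAlgebra A]
variable {H : Type*} [NormedAddCommGroup H] [InnerProductSpace ℂ H] [CompleteSpace H]
variable (M : HBimod A H)

theorem norm_l_le (a : A) (ξ : H) : ‖M.l a ξ‖ ≤ ‖a‖ * ‖ξ‖ :=
  ((M.lmul a).le_opNorm ξ).trans <| by
    gcongr
    exact NonUnitalStarAlgHom.norm_apply_le M.lmul a

theorem norm_inner_l_le (a : A) (η : H) : ‖⟪η, M.l a η⟫_ℂ‖ ≤ ‖a‖ * ‖η‖ ^ 2 :=
  calc ‖⟪η, M.l a η⟫_ℂ‖ ≤ ‖η‖ * (‖a‖ * ‖η‖) :=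
        (norm_inner_le_norm _ _).trans (by gcongr; exact M.norm_l_le a η)
    _ = ‖a‖ * ‖η‖ ^ 2 := by ring

theorem norm_inner_l_div_le (a : A) (η : H) : ‖⟪η, M.l a η⟫_ℂ / (‖η‖ ^ 2 : ℂ)‖ ≤ ‖a‖ := by
  rw [norm_div, norm_pow, Complex.norm_real, norm_norm]
  exact div_le_of_le_mul₀ (by positivity) (norm_nonneg a) (M.norm_inner_l_le a η)

noncomputable def vectorState (η : H) : WeakDual ℂ A :=
  LinearMap.mkContinuous
    { toFun a := ⟪η, M.lmul a η⟫_ℂ / (‖η‖ ^ 2 : ℂ)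
      map_add' a b := by simp only [map_add, add_apply, inner_add_right, add_div]
      map_smul' c a := by simp only [map_smul, smul_apply, inner_smul_right, mul_div_assoc,
        RingHom.id_apply, smul_eq_mul] }
    1 fun a => (one_mul ‖a‖).symm ▸ M.norm_inner_l_div_le a η

theorem vectorState_apply (η : H) (a : A) :
    (M.vectorState η) a = ⟪η, M.l a η⟫_ℂ / (‖η‖ ^ 2 : ℂ) := rfl

theorem vectorState_mem_stateSpace {η : H} (hη : η ≠ 0) : M.vectorState η ∈ stateSpace A := by
  have hη2 : (‖η‖ ^ 2 : ℂ) ≠ 0 := by exact_mod_cast (pow_pos (norm_pos_iff.2 hη) 2).ne'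
  refine ⟨?_, fun a => ?_, ?_⟩
  · exact mem_closedBall_zero_iff.2 <|
      ContinuousLinearMap.opNorm_le_bound _ zero_le_one fun a => by
        rw [one_mul]
        exact M.norm_inner_l_div_le a η
  · rw [vectorState_apply, l_mul, ← inner_l_star_left, star_star, inner_self_eq_norm_sq_to_K]
    exact div_nonneg (pow_nonneg (RCLike.ofReal_nonneg.2 (norm_nonneg _)) 2)
      (pow_nonneg (Complex.zero_le_real.2 (norm_nonneg _)) 2)
  · rw [vectorState_apply, l_one, inner_self_eq_norm_sq_to_K]
    exact div_self hη2

theorem norm_vectorState_mul_sub_mul_le (η : H) (a b : A) :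
    ‖M.vectorState η (a * b) - M.vectorState η (b * a)‖ ≤
      ‖a‖ * (‖M.l b η - M.r b η‖ + ‖M.l (star b) η - M.r (star b) η‖) / ‖η‖ := by
  rcases eq_or_ne η 0 with rfl | hη
  · simp [vectorState_apply]
  have hX : ‖⟪η, M.l a (M.l b η - M.r b η)⟫_ℂ‖ ≤ ‖η‖ * (‖a‖ * ‖M.l b η - M.r b η‖) :=
    (norm_inner_le_norm _ _).trans (by gcongr; exact M.norm_l_le _ _)
  have hY : ‖⟪M.r (star b) η - M.l (star b) η, M.l a η⟫_ℂ‖ ≤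
      ‖M.l (star b) η - M.r (star b) η‖ * (‖a‖ * ‖η‖) :=
    (norm_inner_le_norm _ _).trans (by rw [norm_sub_rev]; gcongr; exact M.norm_l_le _ _)
  rw [vectorState_apply, vectorState_apply, div_sub_div_same, inner_l_mul_sub_inner_l_mul,
    norm_div, norm_pow, Complex.norm_real, norm_norm]
  calc _ ≤ ‖η‖ * (‖a‖ * (‖M.l b η - M.r b η‖ + ‖M.l (star b) η - M.r (star b) η‖)) /
        ‖η‖ ^ 2 := by
        gcongr
        exact (norm_add_le _ _).trans (by linarith)
    _ = _ := by field_simp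

end CStar

end HBimod

open Classical in
theorem exists_almost_tracial_mem_stateSpace_of_not_strongPropertyT
    {A : Type*} [CStarAlgebra A]
    (hA : ¬ StrongPropertyTPair A Set.univ) (Q : Finset A) {ε : ℝ} (hε : 0 < ε) :
    ∃ ψ ∈ stateSpace A, ∀ a, ∀ b ∈ Q, ‖ψ (a * b) - ψ (b * a)‖ ≤ ε * ‖a‖ := by
  simp only [StrongPropertyTPair, not_forall, not_exists, not_and, not_lt] at hA
  obtain ⟨α, hα, hA⟩ := hA
  obtain ⟨H, _, _, _, M, ξ, hξ, hfar⟩ := hA (Q ∪ Q.image star) (ε * α / 2) (by positivity)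
  set η := ξ - M.P Set.univ ξ
  have hη : η ≠ 0 := norm_pos_iff.1 (hα.trans_le hfar)
  have hcomm : ∀ x ∈ Q ∪ Q.image star, ‖M.l x η - M.r x η‖ < ε * α / 2 := fun x hx => by
    rw [M.l_sub_r_sub_P Set.univ (Set.mem_univ x)]
    exact hξ.2 x hx
  refine ⟨M.vectorState η, M.vectorState_mem_stateSpace hη, fun a b hb => ?_⟩
  have hb' := hcomm b (Finset.mem_union_left _ hb)
  have hsb := hcomm (star b) (Finset.mem_union_right _ (Finset.mem_image_of_mem star hb))
  calc _ ≤ ‖a‖ * (‖M.l b η - M.r b η‖ + ‖M.l (star b) η - M.r (star b) η‖) / ‖η‖ :=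
        M.norm_vectorState_mul_sub_mul_le η a b
    _ ≤ ‖a‖ * (ε * α) / α := by gcongr; linarith
    _ = ε * ‖a‖ := by field_simp

theorem strongPropertyT_of_no_tracial_state (A : Type*) [CStarAlgebra A]
    (h : ¬ ∃ τ : A →ₗ[ℂ] ℂ, (∀ a : A, 0 ≤ τ (star a * a)) ∧ τ 1 = 1 ∧
      ∀ a b : A, τ (a * b) = τ (b * a)) :
    StrongPropertyTPair A Set.univ := by
  by_contra hA
  obtain ⟨τ, ⟨-, hpos, hone⟩, htr⟩ :=
    exists_tracial_mem_stateSpace_of_almost_tracial fun Q _ hε =>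
      exists_almost_tracial_mem_stateSpace_of_not_strongPropertyT hA Q hε
  exact h ⟨(WeakDual.toStrongDual τ : A →ₗ[ℂ] ℂ), hpos, hone, htr⟩
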